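/- Let A = diag(−3, 2, 4, 10) acting on ℝ⁴, let Φ_t := exp(tA) = diag(e^{−3t}, e^{2t}, e^{4t}, e^{10t}), let E := span{e₁} and F := span{e₂, e₃, e₄}, where e₁,…,e₄ is the standard basis. Then: (i) the splitting E ⊕ F is dominated for Φ, i.e. there exist K, λ > 0 with ‖Φ_t|_E‖ · ‖Φ_{−t}|_F‖ ≤ K·e^{−λt} for all t ≥ 0; but (ii) in the exterior square Λ²ℝ⁴, with Ẽ := span{e₁∧e₂, e₁∧e₃, e₁∧e₄} and F̃ := span{e₂∧e₃, e₂∧e₄, e₃∧e₄}, the splitting Ẽ ⊕ F̃ is NOT dominated for the induced maps Λ²Φ_t: there exist no K, λ > 0 with ‖(Λ²Φ_t)|_{Ẽ}‖ · ‖(Λ²Φ_{−t})|_{F̃}‖ ≤ K·e^{−λt} for all t ≥ 0. -/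

import Mathlib

/-!
`Φ_t` is diagonal, so its restricted norms are read off the diagonal entries: on `E` it is
`e^{-3t}`, and on `F` the map `Φ_{-t}` contracts by at least `e^{-2t}` when `t ≥ 0`, giving
domination with rate `5`. The compound matrix of a diagonal matrix is again diagonal, with
entries the products of pairs of diagonal entries, so `Λ²Φ_t` scales `e₁∧e₄ ∈ Ẽ` by `e^{7t}`
while `Λ²Φ_{-t}` scales `e₂∧e₃ ∈ F̃` by `e^{-6t}`. The product of the restricted norms is
therefore at least `e^t`, which no bound `K e^{-λt}` can control.
-/

noncomputable section

/-- Index set for the standard basis of the `k`-th exterior power of `ℝⁿ`: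
`k`-element subsets of `Fin n`. -/
abbrev ExtIdx (n k : ℕ) := {s : Finset (Fin n) // s.card = k}

/-- The increasing enumeration of a `k`-element subset of `Fin n`. -/
def extEmb {n k : ℕ} (s : ExtIdx n k) : Fin k → Fin n :=
  fun i => s.1.orderIsoOfFin s.2 i

/-- The wedge product `v 0 ∧ ⋯ ∧ v (k-1)` of `k` vectors of `ℝⁿ`, realized in the concrete
model `Λᵏℝⁿ = EuclideanSpace ℝ (ExtIdx n k)` via its Plücker (minor) coordinates. -/
def wedge {n k : ℕ} (v : Fin k → EuclideanSpace ℝ (Fin n)) :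
    EuclideanSpace ℝ (ExtIdx n k) :=
  WithLp.toLp 2 (fun s => Matrix.det (Matrix.of fun i j => v j (extEmb s i)))

/-- The matrix of a continuous linear map on `ℝⁿ` in the standard basis. -/
def matOf {n : ℕ} (A : EuclideanSpace ℝ (Fin n) →L[ℝ] EuclideanSpace ℝ (Fin n)) :
    Matrix (Fin n) (Fin n) ℝ :=
  Matrix.of fun i j => A (EuclideanSpace.single j 1) i

/-- The induced linear map `Λᵏ A` on the `k`-th exterior power, in the concrete model: its
matrix is the `k`-th compound matrix of the matrix of `A`, so that
`(Λᵏ A)(u₁ ∧ ⋯ ∧ u_k) = A u₁ ∧ ⋯ ∧ A u_k`. -/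
def extPow {n : ℕ} (k : ℕ)
    (A : EuclideanSpace ℝ (Fin n) →L[ℝ] EuclideanSpace ℝ (Fin n)) :
    EuclideanSpace ℝ (ExtIdx n k) →L[ℝ] EuclideanSpace ℝ (ExtIdx n k) :=
  LinearMap.toContinuousLinearMap
    (Matrix.toEuclideanLin
      (Matrix.of fun s t : ExtIdx n k => ((matOf A).submatrix (extEmb s) (extEmb t)).det))

/-- Operator norm of the restriction `A|_W` of `A` to a subspace `W`. -/
def restNorm {V : Type*} [NormedAddCommGroup V] [NormedSpace ℝ V]
    (A : V →L[ℝ] V) (W : Submodule ℝ V) : ℝ :=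
  ‖A.comp W.subtypeL‖

/-- The time-`t` map `Φ_t = exp(tA) = diag(e^{-3t}, e^{2t}, e^{4t}, e^{10t})` of the linear
flow on `ℝ⁴` generated by `A = diag(-3, 2, 4, 10)`. -/
def PhiT (t : ℝ) : EuclideanSpace ℝ (Fin 4) →L[ℝ] EuclideanSpace ℝ (Fin 4) :=
  LinearMap.toContinuousLinearMap
    (Matrix.toEuclideanLin
      (Matrix.diagonal
        ![Real.exp (-3 * t), Real.exp (2 * t), Real.exp (4 * t), Real.exp (10 * t)]))

/-- `e i` is the `i`-th standard basis vector of `ℝ⁴`. -/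
def stdb (i : Fin 4) : EuclideanSpace ℝ (Fin 4) := EuclideanSpace.single i 1


section Restriction

variable {V : Type*} [NormedAddCommGroup V] [NormedSpace ℝ V] (A : V →L[ℝ] V)
  (W : Submodule ℝ V)

lemma restNorm_nonneg : 0 ≤ restNorm A W := norm_nonneg (A.comp W.subtypeL)

lemma norm_apply_le_restNorm {w : V} (hw : w ∈ W) (hw1 : ‖w‖ = 1) : ‖A w‖ ≤ restNorm A W := by
  simpa [restNorm, hw1] using (A.comp W.subtypeL).le_opNorm ⟨w, hw⟩

lemma restNorm_le {C : ℝ} (hC : 0 ≤ C) (h : ∀ w ∈ W, ‖A w‖ ≤ C * ‖w‖) : restNorm A W ≤ C :=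
  ContinuousLinearMap.opNorm_le_bound _ hC fun w => h w w.2

end Restriction

lemma apply_eq_zero_of_mem_span {ι : Type*} {S : Set (EuclideanSpace ℝ ι)} {i : ι}
    (hS : ∀ v ∈ S, v i = 0) {x : EuclideanSpace ℝ ι} (hx : x ∈ Submodule.span ℝ S) : x i = 0 :=
  Submodule.span_induction hS (by simp) (fun _ _ _ _ hx hy => by simp [hx, hy])
    (fun _ _ _ hx => by simp [hx]) hx

section Diagonal

variable {ι : Type*} [Fintype ι] [DecidableEq ι]

def diagCLM (d : ι → ℝ) : EuclideanSpace ℝ ι →L[ℝ] EuclideanSpace ℝ ι :=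
  LinearMap.toContinuousLinearMap (Matrix.toEuclideanLin (Matrix.diagonal d))

@[simp]
lemma diagCLM_apply (d : ι → ℝ) (x : EuclideanSpace ℝ ι) (i : ι) :
    diagCLM d x i = d i * x i := by
  simp [diagCLM, Matrix.toLpLin_apply, Matrix.mulVec_diagonal]

lemma diagCLM_single (d : ι → ℝ) (i : ι) (c : ℝ) :
    diagCLM d (EuclideanSpace.single i c) = EuclideanSpace.single i (d i * c) := by
  ext j
  by_cases h : j = i <;> simp [h]

lemma norm_diagCLM_apply_le (d : ι → ℝ) {C : ℝ} (hC : 0 ≤ C) (x : EuclideanSpace ℝ ι)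
    (h : ∀ i, x i ≠ 0 → |d i| ≤ C) : ‖diagCLM d x‖ ≤ C * ‖x‖ := by
  rw [← sq_le_sq₀ (norm_nonneg _) (by positivity), mul_pow, EuclideanSpace.real_norm_sq_eq,
    EuclideanSpace.real_norm_sq_eq, Finset.mul_sum]
  refine Finset.sum_le_sum fun i _ => ?_
  rw [diagCLM_apply, mul_pow]
  by_cases hx : x i = 0
  · simp [hx]
  · exact mul_le_mul_of_nonneg_right (sq_le_sq' (abs_le.1 (h i hx)).1 (abs_le.1 (h i hx)).2)
      (sq_nonneg _)

lemma restNorm_diagCLM_le (d : ι → ℝ) (W : Submodule ℝ (EuclideanSpace ℝ ι)) (S : Set ι)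
    (hW : ∀ x ∈ W, ∀ i ∉ S, x i = 0) {C : ℝ} (hC : 0 ≤ C) (hd : ∀ i ∈ S, |d i| ≤ C) :
    restNorm (diagCLM d) W ≤ C :=
  restNorm_le _ _ hC fun x hx => norm_diagCLM_apply_le d hC x fun i hi =>
    hd i (by_contra fun hS => hi (hW x hx i hS))

lemma abs_le_restNorm_diagCLM (d : ι → ℝ) (W : Submodule ℝ (EuclideanSpace ℝ ι)) (i : ι)
    (hi : EuclideanSpace.single i 1 ∈ W) : |d i| ≤ restNorm (diagCLM d) W := by
  simpa [diagCLM_single] using norm_apply_le_restNorm (diagCLM d) W hi (by simp)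

lemma matOf_diagCLM {n : ℕ} (d : Fin n → ℝ) : matOf (diagCLM d) = Matrix.diagonal d := by
  ext i j
  by_cases h : i = j <;> simp [matOf, diagCLM_single, h]

end Diagonal

section ExteriorPower

variable {n k : ℕ}

lemma extEmb_injective (s : ExtIdx n k) : Function.Injective (extEmb s) :=
  fun _ _ h => (s.1.orderIsoOfFin s.2).injective (Subtype.ext h)

lemma extEmb_mem (s : ExtIdx n k) (i : Fin k) : extEmb s i ∈ s.1 :=
  (s.1.orderIsoOfFin s.2 i).2

lemma exists_extEmb_notMem {s t : ExtIdx n k} (h : s ≠ t) : ∃ i, extEmb s i ∉ t.1 := by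
  have hst : ¬ s.1 ⊆ t.1 := fun hst =>
    h (Subtype.ext (Finset.eq_of_subset_of_card_le hst (by rw [s.2, t.2])))
  obtain ⟨x, hxs, hxt⟩ := Finset.not_subset.1 hst
  refine ⟨(s.1.orderIsoOfFin s.2).symm ⟨x, hxs⟩, ?_⟩
  simpa [extEmb] using hxt

lemma extEmb_pair {a b : Fin n} (hab : a < b) :
    extEmb (⟨{a, b}, Finset.card_pair hab.ne⟩ : ExtIdx n 2) = ![a, b] := by
  have key : ![a, b] = ({a, b} : Finset (Fin n)).orderEmbOfFin (Finset.card_pair hab.ne) := by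
    refine Finset.orderEmbOfFin_unique _ (fun x => by fin_cases x <;> simp) fun i j hij => ?_
    fin_cases i <;> fin_cases j <;> simp_all
  funext i
  simp [extEmb, key]

lemma det_submatrix_diagonal_extEmb (d : Fin n → ℝ) (s t : ExtIdx n k) :
    ((Matrix.diagonal d).submatrix (extEmb s) (extEmb t)).det =
      if s = t then ∏ i ∈ s.1, d i else 0 := by
  split_ifs with h
  · subst h
    rw [Matrix.submatrix_diagonal _ _ (extEmb_injective s), Matrix.det_diagonal,
      ← Finset.prod_coe_sort s.1]
    exact (s.1.orderIsoOfFin s.2).bijective.prod_comp fun x => d x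
  · obtain ⟨i, hi⟩ := exists_extEmb_notMem h
    refine Matrix.det_eq_zero_of_row_eq_zero i fun j => Matrix.diagonal_apply_ne _ ?_
    exact fun hij => hi (hij ▸ extEmb_mem t j)

lemma extPow_diagCLM (d : Fin n → ℝ) :
    extPow k (diagCLM d) = diagCLM fun s : ExtIdx n k => ∏ i ∈ s.1, d i := by
  simp only [extPow, matOf_diagCLM, det_submatrix_diagonal_extEmb]
  congr

lemma wedge_single_extEmb (s : ExtIdx n k) :
    wedge (fun j => EuclideanSpace.single (extEmb s j) 1) = EuclideanSpace.single s 1 := by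
  ext t
  have hM : (Matrix.of fun i j => EuclideanSpace.single (extEmb s j) (1 : ℝ) (extEmb t i)) =
      (Matrix.diagonal fun _ => 1).submatrix (extEmb t) (extEmb s) := by
    ext i j
    simp [Matrix.one_apply]
  rw [wedge, WithLp.ofLp_toLp, hM, det_submatrix_diagonal_extEmb, Finset.prod_const_one,
    PiLp.single_apply]

end ExteriorPower

open Real

lemma PhiT_eq_diagCLM (t : ℝ) :
    PhiT t = diagCLM ![exp (-3 * t), exp (2 * t), exp (4 * t), exp (10 * t)] := rfl

lemma wedge_stdb {a b : Fin 4} (hab : a < b) :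
    wedge ![stdb a, stdb b] = EuclideanSpace.single ⟨{a, b}, Finset.card_pair hab.ne⟩ 1 := by
  rw [← wedge_single_extEmb, extEmb_pair hab]
  congr
  funext j
  fin_cases j <;> rfl

lemma restNorm_PhiT_span_e₁_le (t : ℝ) :
    restNorm (PhiT t) (Submodule.span ℝ {stdb 0}) ≤ exp (-3 * t) :=
  restNorm_diagCLM_le _ _ {0}
    (fun _ hx i hi => apply_eq_zero_of_mem_span (by simpa [stdb, eq_comm] using hi) hx)
    (exp_nonneg _) (by simp)

lemma restNorm_PhiT_neg_span_e₂e₃e₄_le {t : ℝ} (ht : 0 ≤ t) :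
    restNorm (PhiT (-t)) (Submodule.span ℝ {stdb 1, stdb 2, stdb 3}) ≤ exp (-2 * t) := by
  refine restNorm_diagCLM_le _ _ {0}ᶜ (fun _ hx i hi => ?_) (exp_nonneg _) fun i hi => ?_
  · obtain rfl : i = 0 := by simpa using hi
    exact apply_eq_zero_of_mem_span (by simp [stdb]) hx
  · fin_cases i <;> simp [abs_exp] at hi ⊢ <;> linarith

lemma exp_le_restNorm_extPow_PhiT_mul (t : ℝ) :
    exp t ≤
      restNorm (extPow 2 (PhiT t))
          (Submodule.span ℝ
            {wedge ![stdb 0, stdb 1], wedge ![stdb 0, stdb 2], wedge ![stdb 0, stdb 3]}) *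
        restNorm (extPow 2 (PhiT (-t)))
          (Submodule.span ℝ
            {wedge ![stdb 1, stdb 2], wedge ![stdb 1, stdb 3], wedge ![stdb 2, stdb 3]}) := by
  have he₁₄ : EuclideanSpace.single ⟨{0, 3}, by decide⟩ 1 ∈ Submodule.span ℝ
      {wedge ![stdb 0, stdb 1], wedge ![stdb 0, stdb 2], wedge ![stdb 0, stdb 3]} := by
    rw [← wedge_stdb (by decide)]
    exact Submodule.subset_span (by simp)
  have he₂₃ : EuclideanSpace.single ⟨{1, 2}, by decide⟩ 1 ∈ Submodule.span ℝ
      {wedge ![stdb 1, stdb 2], wedge ![stdb 1, stdb 3], wedge ![stdb 2, stdb 3]} := by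
    rw [← wedge_stdb (by decide)]
    exact Submodule.subset_span (by simp)
  rw [PhiT_eq_diagCLM, PhiT_eq_diagCLM, extPow_diagCLM, extPow_diagCLM]
  refine (le_of_eq ?_).trans (mul_le_mul (abs_le_restNorm_diagCLM _ _ _ he₁₄)
    (abs_le_restNorm_diagCLM _ _ _ he₂₃) (abs_nonneg _) (restNorm_nonneg _ _))
  simp [abs_exp, ← exp_add]
  ring_nf

/-- **Example 1.12.** For `Φ_t = exp(tA)` with `A = diag(-3, 2, 4, 10)` on `ℝ⁴`, the
splitting `E ⊕ F` with `E = span{e₁}`, `F = span{e₂, e₃, e₄}` is dominated, but the induced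
splitting `Ẽ ⊕ F̃` of the exterior square, with `Ẽ = span{e₁∧e₂, e₁∧e₃, e₁∧e₄}` and
`F̃ = span{e₂∧e₃, e₂∧e₄, e₃∧e₄}`, is NOT dominated for the induced maps `Λ²Φ_t`. -/
theorem stmt_17 :
    (∃ K : ℝ, 0 < K ∧ ∃ lam : ℝ, 0 < lam ∧ ∀ t : ℝ, 0 ≤ t →
      restNorm (PhiT t) (Submodule.span ℝ {stdb 0}) *
        restNorm (PhiT (-t)) (Submodule.span ℝ {stdb 1, stdb 2, stdb 3}) ≤
        K * Real.exp (-lam * t)) ∧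
    ¬(∃ K : ℝ, 0 < K ∧ ∃ lam : ℝ, 0 < lam ∧ ∀ t : ℝ, 0 ≤ t →
      restNorm (extPow 2 (PhiT t))
          (Submodule.span ℝ
            {wedge ![stdb 0, stdb 1], wedge ![stdb 0, stdb 2], wedge ![stdb 0, stdb 3]}) *
        restNorm (extPow 2 (PhiT (-t)))
          (Submodule.span ℝ
            {wedge ![stdb 1, stdb 2], wedge ![stdb 1, stdb 3], wedge ![stdb 2, stdb 3]}) ≤
        K * Real.exp (-lam * t)) := by
  refine ⟨⟨1, one_pos, 5, by norm_num, fun t ht => ?_⟩, ?_⟩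
  · calc _ ≤ exp (-3 * t) * exp (-2 * t) :=
          mul_le_mul (restNorm_PhiT_span_e₁_le t) (restNorm_PhiT_neg_span_e₂e₃e₄_le ht)
            (restNorm_nonneg _ _) (exp_nonneg _)
      _ = 1 * exp (-5 * t) := by rw [← exp_add]; ring_nf
  · rintro ⟨K, hK, lam, hlam, hbound⟩
    have hK_bound : exp K ≤ K * exp (-lam * K) :=
      (exp_le_restNorm_extPow_PhiT_mul K).trans (hbound K hK.le)
    have hdecay : exp (-lam * K) ≤ 1 := exp_le_one_iff.2 (by nlinarith)
    nlinarith [add_one_le_exp K]
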